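/- arXiv:2411.19314 — 2 statements merged into one kernel-verified Lean document; each statement's English description precedes it below -/
import Mathlib

section
/- (Acyclic Orderability Theorem, balance implies orderable direction) Let D be a finite acyclic directed multigraph and p : V(D) → ℤ≥0 a pebbling configuration. If every vertex v satisfies p(v) + deg⁻_D(v) − 2·deg⁺_D(v) ≥ 0, then there is an ordering of all the edges of D such that performing pebbling moves along the edges in that order (each move across arc (u,v) removes two pebbles from u and adds one pebble to v) is a valid sequence of pebbling moves starting from p (i.e., at the time each move is performed, its tail has at least two pebbles). -/
open Finset

variable {V : Type*}

/-- A single pebbling move: remove two pebbles from `u`, add one to an adjacent `v`. -/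
def PebMove [DecidableEq V] (G : SimpleGraph V) (p q : V → ℕ) : Prop :=
  ∃ u v : V, G.Adj u v ∧ 2 ≤ p u ∧
    q = fun w => if w = u then p u - 2 else if w = v then p v + 1 else p w

/-- A configuration is `r`-solvable if some sequence of pebbling moves puts a pebble on `r`. -/
def Solvable [DecidableEq V] (G : SimpleGraph V) (p : V → ℕ) (r : V) : Prop :=
  ∃ q : V → ℕ, Relation.ReflTransGen (PebMove G) p q ∧ 1 ≤ q r

/-- The `r`-rooted pebbling number `π(G, r)`. -/
noncomputable def pebNum [DecidableEq V] [Fintype V] (G : SimpleGraph V) (r : V) : ℕ :=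
  sInf {m | ∀ p : V → ℕ, (∑ v, p v) = m → Solvable G p r}

/-- The support-restricted pebbling number `π_S(G, r)`. -/
noncomputable def pebSupp [DecidableEq V] [Fintype V] (G : SimpleGraph V) (r : V) (S : Finset V) : ℕ :=
  sInf {m | ∀ p : V → ℕ, (∀ v, p v ≠ 0 → v ∈ S) → (∑ v, p v) = m → Solvable G p r}

/-- The rooted support-`k` pebbling number `π_k(G, r)`. -/
noncomputable def pebSuppK [DecidableEq V] [Fintype V] (G : SimpleGraph V) (r : V) (k : ℕ) : ℕ :=
  (Finset.univ.powersetCard k).sup (pebSupp G r)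

/-- The support-`k` pebbling number `π_k(G)`. -/
noncomputable def pebKAll [DecidableEq V] [Fintype V] (G : SimpleGraph V) (k : ℕ) : ℕ :=
  sInf {m | ∀ (r : V) (p : V → ℕ),
    (Finset.univ.filter fun v => p v ≠ 0).card ≤ k → (∑ v, p v) = m → Solvable G p r}

/-- The pebbling number `π(G)`. -/
noncomputable def pebAll [DecidableEq V] [Fintype V] (G : SimpleGraph V) : ℕ :=
  sInf {m | ∀ (r : V) (p : V → ℕ), (∑ v, p v) = m → Solvable G p r}

/-- Result of a pebbling move along the arc `a` (two removed from the tail, one added at the head). -/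
def applyArc [DecidableEq V] (p : V → ℕ) (a : V × V) : V → ℕ :=
  fun w => (if w = a.1 then p a.1 - 2 else p w) + (if w = a.2 then 1 else 0)

/-- A list of arcs is a valid sequence of pebbling moves from `p` if each move's tail
has at least two pebbles when the move is performed. -/
def ValidSeq [DecidableEq V] : (V → ℕ) → List (V × V) → Prop
  | _, [] => True
  | p, a :: l => 2 ≤ p a.1 ∧ ValidSeq (applyArc p a) l

/-- In-degree of a vertex in a directed multigraph given by a multiset of arcs. -/
def inDeg [DecidableEq V] (D : Multiset (V × V)) (v : V) : ℕ :=
  (D.filter fun a => a.2 = v).card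

/-- Out-degree of a vertex in a directed multigraph given by a multiset of arcs. -/
def outDeg [DecidableEq V] (D : Multiset (V × V)) (v : V) : ℕ :=
  (D.filter fun a => a.1 = v).card

/-- A nonempty list of arcs forming a directed cycle (head of each arc is tail of the next,
cyclically). -/
def IsDiCycle (l : List (V × V)) : Prop :=
  l ≠ [] ∧ ∀ i : Fin l.length,
    (l.get i).2 = (l.get ⟨(↑i + 1) % l.length, Nat.mod_lt _ (by have := i.isLt; omega)⟩).1

/-- A directed multigraph (multiset of arcs) is acyclic if it contains no directed cycle. -/
def AcyclicArcs (D : Multiset (V × V)) : Prop :=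
  ¬ ∃ l : List (V × V), IsDiCycle l ∧ (↑l : Multiset (V × V)) ≤ D

/-- The directed multigraph containing each arc `a` with multiplicity `z a`. -/
def arcsMultiset [Fintype V] (z : V × V → ℕ) : Multiset (V × V) :=
  ∑ a : V × V, z a • ({a} : Multiset (V × V))

/-! A nonempty acyclic multigraph has an arc `a = (u, v)` whose tail has in-degree zero, since
otherwise following in-arcs backwards through the finitely many arcs would close a directed cycle.
Balance at `u` then gives `p u ≥ 2 · outDeg u ≥ 2`, so the move along `a` is legal, and it keeps the
remaining arcs `D - a` balanced: the two pebbles lost at `u` are offset by one fewer out-arc there,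
the pebble gained at `v` by one fewer in-arc. Induction on the number of arcs finishes the proof. -/

open Function

theorem isDiCycle_reverse_orbit {α : Type*} {g : α → α} {c : α → V × V}
    (hc : ∀ y, (c (g y)).2 = (c y).1) {x : α} (hx : x ∈ periodicPts g) :
    IsDiCycle ((List.range (minimalPeriod g x)).map fun n => c (g^[n] x)).reverse := by
  have hk := minimalPeriod_pos_of_mem_periodicPts hx
  refine ⟨by simpa using hk.ne', fun ⟨i, hi⟩ => ?_⟩
  simp only [List.length_reverse, List.length_map, List.length_range] at hi
  simp only [List.get_eq_getElem, List.getElem_reverse, List.getElem_map, List.getElem_range,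
    List.length_map, List.length_range, List.length_reverse]
  rcases Nat.lt_or_ge (i + 1) (minimalPeriod g x) with h | h
  · rw [Nat.mod_eq_of_lt h, ← hc, ← iterate_succ_apply' g]
    congr 3
    omega
  · rw [show i + 1 = minimalPeriod g x by omega, Nat.mod_self,
      show minimalPeriod g x - 1 - i = 0 by omega, Nat.sub_zero, ← hc, ← iterate_succ_apply' g,
      Nat.succ_eq_add_one, Nat.sub_add_cancel hk, iterate_minimalPeriod, iterate_zero_apply]

theorem AcyclicArcs.mono {D E : Multiset (V × V)} (hD : AcyclicArcs D) (hED : E ≤ D) :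
    AcyclicArcs E :=
  fun ⟨l, hl, hlE⟩ => hD ⟨l, hl, hlE.trans hED⟩

theorem not_acyclicArcs_of_forall_exists_pred {D : Multiset (V × V)} (hD : D ≠ 0)
    (hpred : ∀ a ∈ D, ∃ b ∈ D, b.2 = a.1) : ¬ AcyclicArcs D := by
  choose! g hgD hg using hpred
  let g' : {a // a ∈ D} → {a // a ∈ D} := fun a => ⟨g a, hgD a a.2⟩
  obtain ⟨a, ha⟩ := Multiset.exists_mem_of_ne_zero hD
  have hper : ∃ x, x ∈ periodicPts g' := by
    have : Finite {a // a ∈ D} := D.finite_toSet.to_subtype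
    obtain ⟨i, j, hij, heq⟩ := Finite.exists_ne_map_eq_of_infinite (g'^[·] ⟨a, ha⟩)
    wlog hlt : i < j generalizing i j
    · exact this j i hij.symm heq.symm (by omega)
    refine ⟨g'^[i] ⟨a, ha⟩, j - i, by omega, ?_⟩
    rw [IsPeriodicPt, IsFixedPt, ← iterate_add_apply, Nat.sub_add_cancel hlt.le]
    exact heq.symm
  obtain ⟨x, hx⟩ := hper
  refine fun hacyc => hacyc ⟨_, isDiCycle_reverse_orbit (c := Subtype.val) (fun y => hg y y.2) hx, ?_⟩
  have hnodup : ((List.range (minimalPeriod g' x)).map fun n => (g'^[n] x).val).Nodup := by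
    have := (Cycle.nodup_coe_iff.mp (nodup_periodicOrbit (f := g') (x := x))).map
      Subtype.val_injective
    rwa [List.map_map] at this
  rw [Multiset.coe_reverse, Multiset.le_iff_subset (Multiset.coe_nodup.mpr hnodup)]
  intro b hb
  obtain ⟨n, -, rfl⟩ := List.mem_map.mp (Multiset.mem_coe.mp hb)
  exact (g'^[n] x).2

theorem AcyclicArcs.exists_source [DecidableEq V] {D : Multiset (V × V)} (hacyc : AcyclicArcs D)
    (hD : D ≠ 0) : ∃ a ∈ D, inDeg D a.1 = 0 := by
  by_contra! hsrc
  refine not_acyclicArcs_of_forall_exists_pred hD (fun a ha => ?_) hacyc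
  obtain ⟨b, hb⟩ := Multiset.card_pos_iff_exists_mem.mp (Nat.pos_of_ne_zero (hsrc a ha))
  exact ⟨b, Multiset.mem_filter.mp hb⟩

theorem inDeg_cons [DecidableEq V] (a : V × V) (D : Multiset (V × V)) (w : V) :
    inDeg (a ::ₘ D) w = inDeg D w + if w = a.2 then 1 else 0 := by
  unfold inDeg
  split_ifs with h <;> simp [h, eq_comm]

theorem outDeg_cons [DecidableEq V] (a : V × V) (D : Multiset (V × V)) (w : V) :
    outDeg (a ::ₘ D) w = outDeg D w + if w = a.1 then 1 else 0 := by
  unfold outDeg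
  split_ifs with h <;> simp [h, eq_comm]

def IsBalanced [DecidableEq V] (D : Multiset (V × V)) (p : V → ℕ) : Prop :=
  ∀ v, 0 ≤ (p v : ℤ) + inDeg D v - 2 * outDeg D v

theorem IsBalanced.two_le_of_inDeg_eq_zero [DecidableEq V] {D : Multiset (V × V)} {p : V → ℕ}
    (hbal : IsBalanced D p) {a : V × V} (ha : a ∈ D) (hsrc : inDeg D a.1 = 0) : 2 ≤ p a.1 := by
  have hout : 0 < outDeg D a.1 :=
    Multiset.card_pos_iff_exists_mem.mpr ⟨a, Multiset.mem_filter.mpr ⟨ha, rfl⟩⟩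
  have := hbal a.1
  omega

theorem IsBalanced.applyArc_erase [DecidableEq V] {D : Multiset (V × V)} {p : V → ℕ}
    (hbal : IsBalanced D p) {a : V × V} (ha : a ∈ D) (hp : 2 ≤ p a.1) :
    IsBalanced (D.erase a) (applyArc p a) := by
  intro w
  have := hbal w
  rw [← Multiset.cons_erase ha, inDeg_cons, outDeg_cons] at this
  unfold applyArc
  split_ifs at this ⊢ <;> subst_vars <;> push_cast [Nat.cast_sub hp] at this ⊢ <;> omega

theorem stmt4_general [DecidableEq V] (D : Multiset (V × V)) (p : V → ℕ)
    (hacyc : AcyclicArcs D)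
    (hbal : ∀ v : V, 0 ≤ (p v : ℤ) + inDeg D v - 2 * outDeg D v) :
    ∃ l : List (V × V), (↑l : Multiset (V × V)) = D ∧ ValidSeq p l := by
  change IsBalanced D p at hbal
  induction D using Multiset.strongInductionOn generalizing p with
  | ih D ih =>
    rcases eq_or_ne D 0 with rfl | hD
    · exact ⟨[], rfl, trivial⟩
    obtain ⟨a, ha, hsrc⟩ := hacyc.exists_source hD
    have hp := hbal.two_le_of_inDeg_eq_zero ha hsrc
    obtain ⟨l, hlD, hl⟩ := ih (D.erase a) (Multiset.erase_lt.mpr ha) (applyArc p a)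
      (hacyc.mono (D.erase_le a)) (hbal.applyArc_erase ha hp)
    refine ⟨a :: l, ?_, hp, hl⟩
    rw [← Multiset.cons_coe, hlD, Multiset.cons_erase ha]

/-- Acyclic Orderability Theorem (balance implies orderable): if an acyclic directed
multigraph satisfies the balance condition with respect to `p`, then some ordering of its
edges is a valid sequence of pebbling moves starting from `p`. -/
theorem stmt4 [DecidableEq V] [Fintype V] (D : Multiset (V × V)) (p : V → ℕ)
    (hacyc : AcyclicArcs D)
    (hbal : ∀ v : V, 0 ≤ (p v : ℤ) + inDeg D v - 2 * outDeg D v) :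
    ∃ l : List (V × V), (↑l : Multiset (V × V)) = D ∧ ValidSeq p l :=
  stmt4_general D p hacyc hbal
end

section
/- Let G be a connected graph, r ∈ V(G), and p a pebbling configuration with p(r) = 0. Then p is r-solvable if and only if there exists a function z : A(G) → ℤ≥0 on the arcs of G such that (1) for every vertex v, Σ_{a ∈ δ⁺(v)} 2z(a) ≤ p(v) + Σ_{a ∈ δ⁻(v)} z(a); (2) z(a) = 0 for every arc a leaving r; and (3) Σ_{a ∈ δ⁻(r)} z(a) ≥ 1. -/
open Finset

variable {V : Type*}

section AuxStmt7

variable [DecidableEq V] [Fintype V]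

lemma sum_ite_fst_aux (u v x : V) :
    (∑ w : V, if (x, w) = (u, v) then (1 : ℕ) else 0) = if x = u then 1 else 0 := by
  by_cases h : x = u <;> simp [Prod.ext_iff, h]

lemma sum_ite_snd_aux (u v x : V) :
    (∑ w : V, if (w, x) = (u, v) then (1 : ℕ) else 0) = if x = v then 1 else 0 := by
  by_cases h : x = v <;> simp [Prod.ext_iff, h]

lemma stmt7_forward (G : SimpleGraph V) (r : V) (p q : V → ℕ)
    (hsteps : Relation.ReflTransGen (PebMove G) p q) (hq : 1 ≤ q r) :
    p r = 0 →
    ∃ z : V × V → ℕ,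
      (∀ a : V × V, ¬ G.Adj a.1 a.2 → z a = 0) ∧
      (∀ v : V, 2 * ∑ u : V, z (v, u) ≤ p v + ∑ u : V, z (u, v)) ∧
      (∀ u : V, z (r, u) = 0) ∧
      1 ≤ ∑ u : V, z (u, r) := by
  induction hsteps using Relation.ReflTransGen.head_induction_on with
  | refl => intro h0; omega
  | @head s c step rest ih =>
    intro hs0
    obtain ⟨u, v, hadj, hu2, hc⟩ := step
    have huv : u ≠ v := hadj.ne
    have hur : u ≠ r := by intro h; rw [h, hs0] at hu2; omega
    have hcw : ∀ w, c w = if w = u then s u - 2 else if w = v then s v + 1 else s w :=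
      fun w => by rw [hc]
    by_cases hvr : v = r
    · obtain ⟨z0, hz0⟩ : ∃ f : V × V → ℕ, f = fun a => if a = (u, v) then 1 else 0 := ⟨_, rfl⟩
      have hz0a : ∀ a, z0 a = if a = (u, v) then 1 else 0 := fun a => by rw [hz0]
      have hsf : ∀ x : V, (∑ w : V, z0 (x, w)) = if x = u then 1 else 0 := fun x => by
        simp only [hz0a]; exact sum_ite_fst_aux u v x
      have hss : ∀ x : V, (∑ w : V, z0 (w, x)) = if x = v then 1 else 0 := fun x => by
        simp only [hz0a]; exact sum_ite_snd_aux u v x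
      refine ⟨z0, ?_, ?_, ?_, ?_⟩
      · intro a hna
        have hne : a ≠ (u, v) := by rintro rfl; exact hna hadj
        simp [hz0a, hne]
      · intro x
        rw [hsf, hss]
        by_cases hxu : x = u
        · have h2x : 2 ≤ s x := by rw [hxu]; exact hu2
          rw [if_pos hxu]
          split_ifs <;> omega
        · rw [if_neg hxu]
          split_ifs <;> omega
      · intro w
        have hne : (r, w) ≠ (u, v) := fun h => hur (congrArg Prod.fst h).symm
        simp [hz0a, hne]
      · rw [hss, if_pos hvr.symm]
    · have hru : ¬ r = u := fun h => hur h.symm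
      have hrv : ¬ r = v := fun h => hvr h.symm
      have hcr : c r = 0 := by rw [hcw r, if_neg hru, if_neg hrv]; exact hs0
      obtain ⟨z, hz1, hz2, hz3, hz4⟩ := ih hcr
      obtain ⟨z', hz'⟩ : ∃ f : V × V → ℕ, f = fun a => z a + (if a = (u, v) then 1 else 0) :=
        ⟨_, rfl⟩
      have hz'a : ∀ a, z' a = z a + (if a = (u, v) then 1 else 0) := fun a => by rw [hz']
      have e1 : ∀ x : V, (∑ w : V, z' (x, w)) = (∑ w : V, z (x, w)) + (if x = u then 1 else 0) := by
        intro x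
        simp only [hz'a]
        rw [Finset.sum_add_distrib, sum_ite_fst_aux]
      have e2 : ∀ x : V, (∑ w : V, z' (w, x)) = (∑ w : V, z (w, x)) + (if x = v then 1 else 0) := by
        intro x
        simp only [hz'a]
        rw [Finset.sum_add_distrib, sum_ite_snd_aux]
      refine ⟨z', ?_, ?_, ?_, ?_⟩
      · intro a hna
        have h0 := hz1 a hna
        have hne : a ≠ (u, v) := by rintro rfl; exact hna hadj
        simp [hz'a, h0, hne]
      · intro x
        have hb := hz2 x
        rw [hcw x] at hb
        rw [e1, e2]
        by_cases hxu : x = u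
        · have hxv : x ≠ v := by rw [hxu]; exact huv
          rw [if_pos hxu] at hb ⊢
          rw [if_neg hxv]
          have h2x : 2 ≤ s x := by rw [hxu]; exact hu2
          have hsx : s u = s x := by rw [hxu]
          rw [hsx] at hb
          omega
        · rw [if_neg hxu] at hb ⊢
          by_cases hxv : x = v
          · rw [if_pos hxv] at hb ⊢
            have hsx : s v = s x := by rw [hxv]
            rw [hsx] at hb
            omega
          · rw [if_neg hxv] at hb ⊢
            omega
      · intro w
        have hne : (r, w) ≠ (u, v) := fun h => hur (congrArg Prod.fst h).symm
        simp [hz'a, hz3 w, hne]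
      · rw [e2, if_neg hrv]
        omega

lemma stmt7_backward (G : SimpleGraph V) (r : V) :
    ∀ N : ℕ, ∀ z : V × V → ℕ, ∀ p : V → ℕ, (∑ a : V × V, z a) ≤ N →
      (∀ a : V × V, ¬ G.Adj a.1 a.2 → z a = 0) →
      (∀ v : V, 2 * ∑ u : V, z (v, u) ≤ p v + ∑ u : V, z (u, v)) →
      (∀ u : V, z (r, u) = 0) →
      1 ≤ ∑ u : V, z (u, r) → Solvable G p r := by
  intro N
  induction N with
  | zero =>
    intro z p hN _ _ _ h4
    exfalso
    have hz0 : ∀ a : V × V, z a = 0 := by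
      intro a
      have := Finset.single_le_sum (f := z) (fun i _ => Nat.zero_le (z i)) (Finset.mem_univ a)
      omega
    simp [hz0] at h4
  | succ N ih =>
    intro z p hN h1 h2 h3 h4
    -- find a vertex u with positive out-flow and at least 2 pebbles
    have hex : ∃ u : V, 1 ≤ ∑ w : V, z (u, w) ∧ 2 ≤ p u := by
      by_contra hcon
      push_neg at hcon
      have key : ∀ u : V, (∑ w : V, z (u, w)) ≤ ∑ w : V, z (w, u) := by
        intro u
        by_cases h0 : (∑ w : V, z (u, w)) = 0
        · omega
        · have hpu := hcon u (by omega)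
          have := h2 u
          omega
      have hstrict : (∑ u : V, ∑ w : V, z (u, w)) < ∑ u : V, ∑ w : V, z (w, u) := by
        apply Finset.sum_lt_sum (fun i _ => key i)
        refine ⟨r, Finset.mem_univ r, ?_⟩
        have : (∑ w : V, z (r, w)) = 0 := by simp [h3]
        omega
      rw [Finset.sum_comm] at hstrict
      omega
    obtain ⟨u, hout, hpu⟩ := hex
    have hexv : ∃ v : V, z (u, v) ≠ 0 := by
      by_contra hv
      push_neg at hv
      simp [hv] at hout
    obtain ⟨v, hzv⟩ := hexv
    have hadj : G.Adj u v := by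
      by_contra h
      exact hzv (h1 (u, v) h)
    have huv : u ≠ v := hadj.ne
    have hur : u ≠ r := by
      intro h; subst h
      simp [h3] at hout
    have hru : ¬ r = u := fun h => hur h.symm
    obtain ⟨q, hq⟩ : ∃ f : V → ℕ,
        f = fun w => if w = u then p u - 2 else if w = v then p v + 1 else p w := ⟨_, rfl⟩
    have hqw : ∀ w, q w = if w = u then p u - 2 else if w = v then p v + 1 else p w :=
      fun w => by rw [hq]
    have move : PebMove G p q := ⟨u, v, hadj, hpu, hq⟩
    by_cases hvr : v = r
    · refine ⟨q, Relation.ReflTransGen.single move, ?_⟩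
      rw [hqw r, if_neg hru, if_pos hvr.symm]
      omega
    · have hrv : ¬ r = v := fun h => hvr h.symm
      obtain ⟨z', hz'⟩ : ∃ f : V × V → ℕ, f = fun a => z a - (if a = (u, v) then 1 else 0) :=
        ⟨_, rfl⟩
      have hz'a : ∀ a, z' a = z a - (if a = (u, v) then 1 else 0) := fun a => by rw [hz']
      have e1 : ∀ x : V, (∑ w : V, z' (x, w)) + (if x = u then 1 else 0) =
          ∑ w : V, z (x, w) := by
        intro x
        rw [← sum_ite_fst_aux u v x, ← Finset.sum_add_distrib]
        refine Finset.sum_congr rfl fun w _ => ?_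
        by_cases h : (x, w) = (u, v)
        · rw [h]
          simp [hz'a]
          omega
        · simp [hz'a, h]
      have e2 : ∀ x : V, (∑ w : V, z' (w, x)) + (if x = v then 1 else 0) =
          ∑ w : V, z (w, x) := by
        intro x
        rw [← sum_ite_snd_aux u v x, ← Finset.sum_add_distrib]
        refine Finset.sum_congr rfl fun w _ => ?_
        by_cases h : (w, x) = (u, v)
        · rw [h]
          simp [hz'a]
          omega
        · simp [hz'a, h]
      have htot : (∑ a : V × V, z' a) + 1 = ∑ a : V × V, z a := by
        have hone : (∑ a : V × V, if a = (u, v) then (1 : ℕ) else 0) = 1 := by simp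
        rw [← hone, ← Finset.sum_add_distrib]
        refine Finset.sum_congr rfl fun a _ => ?_
        by_cases h : a = (u, v)
        · rw [h]
          simp [hz'a]
          omega
        · simp [hz'a, h]
      have hsolv : Solvable G q r := by
        apply ih z' q (by omega)
        · intro a hna
          have h0 := h1 a hna
          simp [hz'a, h0]
        · intro x
          have hb := h2 x
          have ex1 := e1 x
          have ex2 := e2 x
          rw [hqw x]
          by_cases hxu : x = u
          · have hxv : x ≠ v := by rw [hxu]; exact huv
            rw [if_pos hxu] at ex1 ⊢
            rw [if_neg hxv] at ex2
            have hpx : p u = p x := by rw [hxu]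
            rw [hpx] at hpu ⊢
            omega
          · rw [if_neg hxu] at ex1 ⊢
            by_cases hxv : x = v
            · rw [if_pos hxv] at ex2 ⊢
              have hpx : p v = p x := by rw [hxv]
              rw [hpx]
              omega
            · rw [if_neg hxv] at ex2 ⊢
              omega
        · intro w
          have hne : (r, w) ≠ (u, v) := fun h => hur (congrArg Prod.fst h).symm
          simp [hz'a, hne, h3 w]
        · have er := e2 r
          rw [if_neg hrv] at er
          omega
      obtain ⟨q', hsteps', hq'⟩ := hsolv
      exact ⟨q', Relation.ReflTransGen.head move hsteps', hq'⟩

end AuxStmt7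

/-- Solvability is equivalent to the existence of a feasible integer flow of pebbles. -/
theorem stmt7 [DecidableEq V] [Fintype V] (G : SimpleGraph V) (hconn : G.Connected)
    (r : V) (p : V → ℕ) (hp : p r = 0) :
    Solvable G p r ↔ ∃ z : V × V → ℕ,
      (∀ a : V × V, ¬ G.Adj a.1 a.2 → z a = 0) ∧
      (∀ v : V, 2 * ∑ u : V, z (v, u) ≤ p v + ∑ u : V, z (u, v)) ∧
      (∀ u : V, z (r, u) = 0) ∧
      1 ≤ ∑ u : V, z (u, r) := by
  constructor
  · rintro ⟨q, hsteps, hq⟩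
    exact stmt7_forward G r p q hsteps hq hp
  · rintro ⟨z, h1, h2, h3, h4⟩
    exact stmt7_backward G r (∑ a : V × V, z a) z p le_rfl h1 h2 h3 h4
end
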